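/- Under the hypotheses of the previous construction (ℓ = r_n - 2r_{n-1} ≥ 0, A nonzero symmetric with a_i^j = 0 unless r_i = r_j = r_{n-1}), the derivation D_ℓ^A of 𝔪 = g_{<0}(h) is not of the form ad_Z = [Z, ·] for any polynomial vector field Z of weight ℓ: it vanishes on all coordinate vector fields ∂_{x^i} but is nonzero. -/
import Mathlib


open MvPolynomial

/-- Polynomial vector fields on ℝⁿ, given by their coefficient polynomials. -/
abbrev VF (n : ℕ) := Fin n → MvPolynomial (Fin n) ℝ

/-- Lie bracket of polynomial vector fields. -/
noncomputable def bracket {n : ℕ} (V W : VF n) : VF n :=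
  fun i => ∑ j, (V j * pderiv j (W i) - W j * pderiv j (V i))

/-- The weight (Euler) vector field ∇ʰ = Σᵢ rᵢ xⁱ ∂ᵢ of the dilation with weights r. -/
noncomputable def nabla {n : ℕ} (r : Fin n → ℕ) : VF n :=
  fun i => (r i : MvPolynomial (Fin n) ℝ) * X i

/-- A polynomial vector field is homogeneous of weight `a` w.r.t. the dilation `r`. -/
def IsHomog {n : ℕ} (r : Fin n → ℕ) (a : ℤ) (V : VF n) : Prop :=
  bracket (nabla r) V = fun i => (a : ℝ) • V i

/-- The coordinate vector field ∂ᵢ. -/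
noncomputable def coordVF {n : ℕ} (i : Fin n) : VF n := fun k => if k = i then 1 else 0

/-- The vector field f ∂ⱼ. -/
noncomputable def vfOf {n : ℕ} (f : MvPolynomial (Fin n) ℝ) (j : Fin n) : VF n :=
  fun k => if k = j then f else 0

/-- 𝔪 = g₋(h): the span of homogeneous polynomial vector fields of negative weight. -/
noncomputable def negPart {n : ℕ} (r : Fin n → ℕ) : Submodule ℝ (VF n) :=
  Submodule.span ℝ {V : VF n | ∃ k : ℤ, k < 0 ∧ IsHomog r k V}



lemma homog_coord {n : ℕ} (r : Fin n → ℕ) (i : Fin n) :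
    IsHomog r (-(r i : ℤ)) (coordVF i) := by
  funext k
  simp only [bracket, nabla, coordVF]
  simp only [apply_ite (pderiv _), Derivation.map_one_eq_zero, map_zero, ite_self, mul_zero,
    Derivation.leibniz, pderiv_X, Pi.single_apply, smul_eq_mul, mul_ite, mul_one,
    Derivation.map_natCast, add_zero, ite_mul, one_mul, zero_mul, zero_sub,
    Finset.sum_neg_distrib, Finset.sum_ite_eq, Finset.mem_univ, ↓reduceIte, Int.cast_neg,
    Int.cast_natCast, smul_ite, neg_smul, smul_zero]
  by_cases h : k = i <;> simp [h, smul_eq_C_mul]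

lemma homog_vfX {n : ℕ} (r : Fin n → ℕ) (i j : Fin n) :
    IsHomog r ((r i : ℤ) - (r j : ℤ)) (vfOf (X i) j) := by
  funext k
  simp only [bracket, nabla, vfOf]
  simp only [apply_ite (pderiv _), pderiv_X, Pi.single_apply, map_zero, mul_ite, mul_one,
    mul_zero, Derivation.leibniz, smul_eq_mul, Derivation.map_natCast, add_zero, ite_mul,
    zero_mul, Finset.sum_sub_distrib, Finset.sum_ite_irrel, Finset.sum_ite_eq, Finset.mem_univ,
    ↓reduceIte, Finset.sum_const_zero, Int.cast_sub, Int.cast_natCast, smul_ite, smul_zero]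
  by_cases h : k = j
  · subst h
    simp only [ite_true, if_pos trivial, smul_eq_C_mul, map_sub, map_natCast]
    ring
  · simp [h]

lemma coord_mem {n : ℕ} (r : Fin n → ℕ) (hr : ∀ i, 0 < r i) (i : Fin n) :
    coordVF i ∈ negPart r := by
  apply Submodule.subset_span
  exact ⟨-(r i : ℤ), by have := hr i; omega, homog_coord r i⟩

lemma vfX_mem {n : ℕ} (r : Fin n → ℕ) (i j : Fin n) (h : r i < r j) :
    vfOf (X i) j ∈ negPart r := by
  apply Submodule.subset_span
  exact ⟨(r i : ℤ) - (r j : ℤ), by omega, homog_vfX r i j⟩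

lemma bracket_coord {n : ℕ} (Z : VF n) (i k : Fin n) :
    bracket Z (coordVF i) k = - pderiv i (Z k) := by
  simp only [bracket, coordVF]
  rw [Finset.sum_eq_single i]
  · by_cases h : k = i <;> simp [h, apply_ite (pderiv _)]
  · intro b _ hb; simp [hb, apply_ite (pderiv b)]
  · simp

lemma bracket_vfX {n : ℕ} (Z : VF n) (hZ : ∀ j k, pderiv j (Z k) = 0) (i j k : Fin n) :
    bracket Z (vfOf (X i) j) k = if k = j then Z i else 0 := by
  simp only [bracket, vfOf, hZ, mul_zero, ite_mul, zero_mul,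
    apply_ite (pderiv _), pderiv_X, Pi.single_apply]
  simp only [Finset.sum_sub_distrib, Finset.sum_ite_irrel, Finset.sum_ite_eq, apply_ite,
    Finset.mem_univ, if_true, map_zero, mul_zero, ite_self, Finset.sum_const_zero, sub_zero,
    mul_one]
  by_cases h : k = j <;> simp [h]

/-- With `ℓ = rₙ - 2rₙ₋₁ ≥ 0` and `A` nonzero symmetric supported on
indices of weight `rₙ₋₁`, the derivation `D_ℓ^A` is nonzero on `𝔪 = g₋(h)` but is not
of the form `ad_Z = [Z,·]` for any polynomial vector field `Z`: it vanishes on all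
coordinate vector fields yet is nonzero. -/
theorem DlA_not_inner
    (n : ℕ) (r : Fin (n + 2) → ℕ) (hr : ∀ i, 0 < r i) (hmono : Monotone r)
    (hℓ : 0 ≤ (r (Fin.last (n + 1)) : ℤ) - 2 * (r (⟨n, by omega⟩ : Fin (n + 2)) : ℤ))
    (a : Fin (n + 2) → Fin (n + 2) → ℝ)
    (hsymm : ∀ i j, a i j = a j i)
    (hsupp : ∀ i j, a i j ≠ 0 →
      r i = r (⟨n, by omega⟩ : Fin (n + 2)) ∧ r j = r (⟨n, by omega⟩ : Fin (n + 2)) ∧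
      i ≠ Fin.last (n + 1) ∧ j ≠ Fin.last (n + 1))
    (hA : ∃ i j, a i j ≠ 0)
    (D : VF (n + 2) → VF (n + 2))
    (hadd : ∀ V W, D (V + W) = D V + D W)
    (hsmul : ∀ (c : ℝ) V, D (c • V) = c • D V)
    (hconst : ∀ i, D (coordVF i) = 0)
    (hlinval : ∀ i j : Fin (n + 2),
      D (vfOf (X i) j) = if j = Fin.last (n + 1) then (fun k => C (a i k)) else 0)
    (hmul : ∀ (f g : MvPolynomial (Fin (n + 2)) ℝ) (j : Fin (n + 2)),
      D (vfOf (f * g) j) = (fun k => f * D (vfOf g j) k + g * D (vfOf f j) k))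
    : (∃ V ∈ negPart r, D V ≠ 0) ∧
      ¬ ∃ Z : VF (n + 2), ∀ V ∈ negPart r, D V = bracket Z V := by
  obtain ⟨i, j, hij⟩ := hA
  obtain ⟨hri, hrj, hine, hjne⟩ := hsupp i j hij
  have hlt : r i < r (Fin.last (n + 1)) := by
    have hp := hr (⟨n, by omega⟩ : Fin (n + 2))
    omega
  have hDV : D (vfOf (X i) (Fin.last (n + 1))) = fun k => C (a i k) := by
    rw [hlinval, if_pos rfl]
  constructor
  · refine ⟨vfOf (X i) (Fin.last (n + 1)), vfX_mem r _ _ hlt, ?_⟩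
    intro h
    rw [hDV] at h
    have := congrFun h j
    simp only [Pi.zero_apply] at this
    exact hij (by simpa using this)
  · rintro ⟨Z, hZ⟩
    have hder : ∀ m k, pderiv m (Z k) = 0 := by
      intro m k
      have h1 := hZ (coordVF m) (coord_mem r hr m)
      rw [hconst] at h1
      have h2 := congrFun h1 k
      rw [bracket_coord] at h2
      simp only [Pi.zero_apply] at h2
      exact neg_eq_zero.mp h2.symm
    have h2 := hZ _ (vfX_mem r i (Fin.last (n + 1)) hlt)
    rw [hDV] at h2
    have h3 := congrFun h2 j
    rw [bracket_vfX Z hder i (Fin.last (n + 1)) j, if_neg hjne] at h3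
    exact hij (by simpa using h3)
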